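/- Under the constraint μ₁ = μ₂ = μ, the KL-minimizing common fundamental is μ△*(c) = [1/(1 + P[X₁ ≤ c](1+γ)²)]·μ• + [P[X₁ ≤ c](1+γ)²/(1 + P[X₁ ≤ c](1+γ)²)]·μ₂°(c), where μ₂°(c) = μ• − (γ/(1+γ))(μ• − E[X₁ | X₁ ≤ c]). Moreover μ△*(c) < μ• and μ△*(c) > μ• − γ(μ• − E[X₁ | X₁ ≤ c]) for every c ∈ ℝ when γ > 0. -/

import Mathlib

/-!
Expanding the square inside the integral writes `ξ` as a quadratic polynomial in `μ` with leading
coefficient `K / 2`, `K = 1 + P (1 + γ)²`, `P = P[X₁ ≤ c]`. Completing the square gives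
`ξ μ = ξ μ△ + K / 2 · (μ - μ△)²` for the root `μ△` of the first-order condition
`K μ = μ• + (1 + γ) P (μ• + γ E[X₁ | X₁ ≤ c])`, so `μ△` is the unique minimizer. Both bounds on `μ△`
then reduce to `E[X₁ | X₁ ≤ c] < μ•`, which holds because `∫_{-∞}^c (x - μ•) φ(x) dx = -σ² φ(c) < 0`.
-/

open MeasureTheory Set

/-- Gaussian density with mean `a` and variance `s2`. -/
noncomputable def gauss (a s2 x : ℝ) : ℝ :=
  (Real.sqrt (2 * Real.pi * s2))⁻¹ * Real.exp (-(x - a) ^ 2 / (2 * s2))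

/-- Mean of a `N(a, s2)` random variable truncated above at `c`, i.e. `E[X | X ≤ c]`. -/
noncomputable def truncMean (a s2 c : ℝ) : ℝ :=
  (∫ x in Iic c, x * gauss a s2 x) / (∫ x in Iic c, gauss a s2 x)

/-- The KL objective for the constrained inference `μ₁ = μ₂ = μ` (up to constants). -/
noncomputable def xiCommon (μb s2 γ c μ : ℝ) : ℝ :=
  (μ - μb) ^ 2 / 2 + ∫ x in Iic c, gauss μb s2 x * ((1 + γ) * μ - γ * x - μb) ^ 2 / 2

open ProbabilityTheory

section Gaussian

variable (a : ℝ) {s2 : ℝ}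

lemma gauss_eq_gaussianPDFReal (hs2 : 0 ≤ s2) : gauss a s2 = gaussianPDFReal a s2.toNNReal := by
  ext x
  simp [gauss, gaussianPDFReal, Real.coe_toNNReal _ hs2]

lemma gauss_pos (hs2 : 0 < s2) (x : ℝ) : 0 < gauss a s2 x := by
  rw [gauss_eq_gaussianPDFReal a hs2.le]
  exact gaussianPDFReal_pos _ _ _ (by simpa using hs2)

lemma integrable_pow_mul_gauss (hs2 : 0 < s2) (n : ℕ) :
    Integrable (fun x => x ^ n * gauss a s2 x) := by
  have h := (memLp_id_gaussianReal (μ := a) (v := s2.toNNReal) n).integrable_norm_pow'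
  rw [gaussianReal_of_var_ne_zero _ (by simpa using hs2),
    integrable_withDensity_iff_integrable_smul' (measurable_gaussianPDF _ _)
      (ae_of_all _ fun _ => gaussianPDF_lt_top)] at h
  rw [gauss_eq_gaussianPDFReal a hs2.le, ← integrable_norm_iff (by fun_prop)]
  refine h.congr (ae_of_all _ fun x => ?_)
  simp [abs_of_nonneg (gaussianPDFReal_nonneg _ _ _), mul_comm]

lemma integrable_gauss (hs2 : 0 < s2) : Integrable (gauss a s2) := by
  simpa using integrable_pow_mul_gauss a hs2 0

lemma integrable_mul_gauss (hs2 : 0 < s2) : Integrable (fun x => x * gauss a s2 x) := by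
  simpa using integrable_pow_mul_gauss a hs2 1

lemma hasDerivAt_gauss (hs2 : s2 ≠ 0) (x : ℝ) :
    HasDerivAt (gauss a s2) (-(x - a) / s2 * gauss a s2 x) x := by
  have hexp := (((hasDerivAt_id' x).sub_const a).fun_pow 2).fun_neg.div_const (2 * s2)
  refine (hexp.exp.const_mul (Real.sqrt (2 * Real.pi * s2))⁻¹).congr_deriv ?_
  unfold gauss
  field_simp
  ring

lemma setIntegral_Iic_sub_mul_gauss (hs2 : 0 < s2) (c : ℝ) :
    ∫ x in Iic c, (x - a) * gauss a s2 x = -(s2 * gauss a s2 c) := by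
  have hderiv (x : ℝ) : HasDerivAt (fun y => -(s2 * gauss a s2 y)) ((x - a) * gauss a s2 x) x :=
    ((hasDerivAt_gauss a hs2.ne' x).const_mul s2).neg.congr_deriv (by field_simp)
  have hint : Integrable (fun x => (x - a) * gauss a s2 x) := by
    simp only [sub_mul]
    exact (integrable_mul_gauss a hs2).sub ((integrable_gauss a hs2).const_mul a)
  have hlim := tendsto_zero_of_hasDerivAt_of_integrableOn_Iic (a := c) (fun x _ => hderiv x)
    hint.integrableOn ((integrable_gauss a hs2).const_mul s2).neg.integrableOn
  simpa using integral_Iic_of_hasDerivAt_of_tendsto' (fun x _ => hderiv x) hint.integrableOn hlim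

lemma setIntegral_Iic_gauss_pos (hs2 : 0 < s2) (c : ℝ) : 0 < ∫ x in Iic c, gauss a s2 x := by
  rw [setIntegral_pos_iff_support_of_nonneg_ae (ae_of_all _ fun x => (gauss_pos a hs2 x).le)
    (integrable_gauss a hs2).integrableOn, Function.support_eq_univ fun x => (gauss_pos a hs2 x).ne']
  simp

lemma setIntegral_Iic_mul_gauss_lt (hs2 : 0 < s2) (c : ℝ) :
    ∫ x in Iic c, x * gauss a s2 x < a * ∫ x in Iic c, gauss a s2 x := by
  have h := setIntegral_Iic_sub_mul_gauss a hs2 c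
  simp only [sub_mul] at h
  rw [integral_sub (integrable_mul_gauss a hs2).integrableOn
    ((integrable_gauss a hs2).const_mul a).integrableOn, integral_const_mul] at h
  nlinarith [gauss_pos a hs2 c]

lemma truncMean_lt (hs2 : 0 < s2) (c : ℝ) : truncMean a s2 c < a :=
  (div_lt_iff₀ (setIntegral_Iic_gauss_pos a hs2 c)).2 (setIntegral_Iic_mul_gauss_lt a hs2 c)

end Gaussian

lemma setIntegral_Iic_mul_gauss_eq {a s2 : ℝ} (hs2 : 0 < s2) (c : ℝ) :
    ∫ x in Iic c, x * gauss a s2 x = (∫ x in Iic c, gauss a s2 x) * truncMean a s2 c :=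
  (mul_div_cancel₀ _ (setIntegral_Iic_gauss_pos a hs2 c).ne').symm

lemma xiCommon_eq {μb s2 : ℝ} (hs2 : 0 < s2) (γ c μ : ℝ) :
    xiCommon μb s2 γ c μ = (μ - μb) ^ 2 / 2
      + (∫ x in Iic c, gauss μb s2 x) / 2 * ((1 + γ) * μ - μb) ^ 2
      - γ * ((1 + γ) * μ - μb) * (∫ x in Iic c, x * gauss μb s2 x)
      + γ ^ 2 / 2 * ∫ x in Iic c, x ^ 2 * gauss μb s2 x := by
  set d := (1 + γ) * μ - μb
  have hI0 := ((integrable_gauss μb hs2).const_mul (d ^ 2 / 2)).integrableOn (s := Iic c)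
  have hI1 := ((integrable_mul_gauss μb hs2).const_mul (γ * d)).integrableOn (s := Iic c)
  have hI2 := ((integrable_pow_mul_gauss μb hs2 2).const_mul (γ ^ 2 / 2)).integrableOn (s := Iic c)
  have hexpand : ∀ x, gauss μb s2 x * ((1 + γ) * μ - γ * x - μb) ^ 2 / 2
      = d ^ 2 / 2 * gauss μb s2 x - γ * d * (x * gauss μb s2 x)
        + γ ^ 2 / 2 * (x ^ 2 * gauss μb s2 x) := fun x => by ring
  rw [xiCommon, funext hexpand, integral_add (hI0.fun_sub hI1) hI2, integral_sub hI0 hI1,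
    integral_const_mul, integral_const_mul, integral_const_mul]
  ring

lemma xiCommon_eq_add_sq {μb s2 γ c m : ℝ} (hs2 : 0 < s2)
    (hm : (1 + (∫ x in Iic c, gauss μb s2 x) * (1 + γ) ^ 2) * m
      = μb + (1 + γ) * (∫ x in Iic c, gauss μb s2 x) * (μb + γ * truncMean μb s2 c)) (μ : ℝ) :
    xiCommon μb s2 γ c μ = xiCommon μb s2 γ c m
      + (1 + (∫ x in Iic c, gauss μb s2 x) * (1 + γ) ^ 2) / 2 * (μ - m) ^ 2 := by
  rw [xiCommon_eq hs2, xiCommon_eq hs2, setIntegral_Iic_mul_gauss_eq hs2]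
  linear_combination (μ - m) * hm

lemma unique_minimizer_of_eq_add_sq {f : ℝ → ℝ} {m K : ℝ} (hK : 0 < K)
    (hf : ∀ μ, f μ = f m + K / 2 * (μ - m) ^ 2) :
    (∀ μ, f m ≤ f μ) ∧ ∀ μ, (∀ μ', f μ ≤ f μ') → μ = m := by
  refine ⟨fun μ => (hf μ).symm ▸ le_add_of_nonneg_right (by positivity), fun μ hμ => ?_⟩
  have hsq : K / 2 * (μ - m) ^ 2 ≤ 0 := by linarith [hf μ, hμ m]
  have : (μ - m) ^ 2 = 0 := le_antisymm (nonpos_of_mul_nonpos_right hsq (by positivity)) (sq_nonneg _)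
  exact sub_eq_zero.1 (pow_eq_zero_iff two_ne_zero |>.1 this)

lemma mem_Ioo_of_mul_eq {μb γ P T m : ℝ} (hγ : 0 < γ) (hP : 0 < P) (hT : T < μb)
    (hm : (1 + P * (1 + γ) ^ 2) * m = μb + (1 + γ) * P * (μb + γ * T)) :
    m ∈ Ioo (μb - γ * (μb - T)) μb := by
  have hK : 0 < 1 + P * (1 + γ) ^ 2 := by positivity
  have hgap : 0 < μb - T := sub_pos.2 hT
  constructor
  · have : (1 + P * (1 + γ) ^ 2) * (m - (μb - γ * (μb - T)))
        = γ * (μb - T) * (1 + γ * (1 + γ) * P) := by linear_combination hm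
    exact sub_pos.1 (pos_of_mul_pos_right (this ▸ by positivity) hK.le)
  · have : (1 + P * (1 + γ) ^ 2) * (μb - m) = γ * (1 + γ) * P * (μb - T) := by
      linear_combination -hm
    exact sub_pos.1 (pos_of_mul_pos_right (this ▸ by positivity) hK.le)

/-- Under the constraint `μ₁ = μ₂ = μ`, the unique KL minimizer is the stated convex
combination of `μ•` and `μ₂°(c) = μ• − (γ/(1+γ))(μ• − E[X₁|X₁ ≤ c])`; moreover it is
strictly below `μ•` and strictly above the unconstrained pseudo-true fundamental
`μ• − γ(μ• − E[X₁|X₁ ≤ c])`. -/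
theorem constrained_pseudo_true (μb s2 γ c : ℝ) (hs2 : 0 < s2) (hγ : 0 < γ) :
    let P := ∫ x in Iic c, gauss μb s2 x
    let μ2c := μb - γ / (1 + γ) * (μb - truncMean μb s2 c)
    let μΔ := 1 / (1 + P * (1 + γ) ^ 2) * μb +
      P * (1 + γ) ^ 2 / (1 + P * (1 + γ) ^ 2) * μ2c
    (∀ μ : ℝ, xiCommon μb s2 γ c μΔ ≤ xiCommon μb s2 γ c μ) ∧
    (∀ μ : ℝ, (∀ μ' : ℝ, xiCommon μb s2 γ c μ ≤ xiCommon μb s2 γ c μ') → μ = μΔ) ∧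
    μΔ < μb ∧ μb - γ * (μb - truncMean μb s2 c) < μΔ := by
  intro P μ2c μΔ
  have hP : 0 < P := setIntegral_Iic_gauss_pos μb hs2 c
  have hK : 0 < 1 + P * (1 + γ) ^ 2 := by positivity
  have hμΔ : (1 + P * (1 + γ) ^ 2) * μΔ = μb + (1 + γ) * P * (μb + γ * truncMean μb s2 c) := by
    simp only [μΔ, μ2c]
    field_simp
    ring
  obtain ⟨hmin, huniq⟩ := unique_minimizer_of_eq_add_sq hK (xiCommon_eq_add_sq hs2 hμΔ)
  obtain ⟨hlo, hhi⟩ := mem_Ioo_of_mul_eq hγ hP (truncMean_lt μb hs2 c) hμΔ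
  exact ⟨hmin, huniq, hhi, hlo⟩
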